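/- arXiv:math/0610398 — 4 statements merged into one kernel-verified Lean document; each statement's English description precedes it below -/
import Mathlib

section
/- Let A be a finite dimensional Hopf algebra over a field k, and let A₁, A₂ be subalgebras of A such that the multiplication map m : A₁ ⊗ A₂ → A is a linear isomorphism, A₁ is a left coideal (Δ(A₁) ⊆ A ⊗ A₁) and A₂ is a right coideal (Δ(A₂) ⊆ A₂ ⊗ A). Define linear maps P₁ : A → A₁ and P₂ : A → A₂ by P₁(a₁a₂) = a₁ ε(a₂) and P₂(a₁a₂) = ε(a₁) a₂ for a₁ ∈ A₁, a₂ ∈ A₂. Then m ∘ (P₁ ⊗ P₂) ∘ Δ = id on A. -/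
open TensorProduct

noncomputable section

/-- The tensor product of two submodules, as a submodule of the tensor product:
the image of `p ⊗ q` under the canonical map. -/
def sTen (k : Type*) [CommSemiring k] {A B : Type*} [AddCommMonoid A] [AddCommMonoid B]
    [Module k A] [Module k B] (p : Submodule k A) (q : Submodule k B) :
    Submodule k (A ⊗[k] B) :=
  LinearMap.range (TensorProduct.map p.subtype q.subtype)

/-- if `A` is a finite dimensional Hopf algebra over a field `k`,
`A₁, A₂` are subalgebras such that multiplication `A₁ ⊗ A₂ → A` is a linear
isomorphism, `A₁` is a left coideal and `A₂` is a right coideal, and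
`P₁, P₂` are the linear maps determined by `P₁(a₁a₂) = a₁ ε(a₂)`,
`P₂(a₁a₂) = ε(a₁) a₂`, then `m ∘ (P₁ ⊗ P₂) ∘ Δ = id`. -/
theorem stmt0 (k A : Type*) [Field k] [Ring A] [HopfAlgebra k A] [FiniteDimensional k A]
    (A₁ A₂ : Subalgebra k A)
    (hiso : Function.Bijective
      ((LinearMap.mul' k A).comp
        (TensorProduct.map (Subalgebra.toSubmodule A₁).subtype
          (Subalgebra.toSubmodule A₂).subtype)))
    (hA₁ : ∀ x ∈ A₁, Coalgebra.comul (R := k) x ∈ sTen k ⊤ (Subalgebra.toSubmodule A₁))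
    (hA₂ : ∀ x ∈ A₂, Coalgebra.comul (R := k) x ∈ sTen k (Subalgebra.toSubmodule A₂) ⊤)
    (P₁ P₂ : A →ₗ[k] A)
    (hP₁ : ∀ a₁ ∈ A₁, ∀ a₂ ∈ A₂, P₁ (a₁ * a₂) = Coalgebra.counit (R := k) a₂ • a₁)
    (hP₂ : ∀ a₁ ∈ A₁, ∀ a₂ ∈ A₂, P₂ (a₁ * a₂) = Coalgebra.counit (R := k) a₁ • a₂) :
    ∀ a : A,
      LinearMap.mul' k A (TensorProduct.map P₁ P₂ (Coalgebra.comul (R := k) a)) = a := by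
  classical
  set ε := Coalgebra.counit (R := k) (A := A) with hε
  -- P₁ is right ε-linear over A₂, P₂ is left ε-linear over A₁
  have L1 : ∀ v ∈ A₂, ∀ x : A, P₁ (x * v) = ε v • P₁ x := by
    intro v hv x
    obtain ⟨t, rfl⟩ := hiso.2 x
    induction t with
    | zero => simp
    | tmul p q =>
        have hp : (p : A) ∈ A₁ := p.2
        have hq : (q : A) ∈ A₂ := q.2
        simp only [LinearMap.comp_apply, TensorProduct.map_tmul, LinearMap.mul'_apply,
          Submodule.subtype_apply]
        rw [mul_assoc, hP₁ _ hp _ (mul_mem hq hv), hP₁ _ hp _ hq,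
          Bialgebra.counit_mul, mul_comm, mul_smul]
    | add x y hx hy =>
        simp only [map_add, add_mul, hx, hy, smul_add]
  have L2 : ∀ u ∈ A₁, ∀ y : A, P₂ (u * y) = ε u • P₂ y := by
    intro u hu y
    obtain ⟨t, rfl⟩ := hiso.2 y
    induction t with
    | zero => simp
    | tmul p q =>
        have hp : (p : A) ∈ A₁ := p.2
        have hq : (q : A) ∈ A₂ := q.2
        simp only [LinearMap.comp_apply, TensorProduct.map_tmul, LinearMap.mul'_apply,
          Submodule.subtype_apply]
        rw [← mul_assoc, hP₂ _ (mul_mem hu hp) _ hq, hP₂ _ hp _ hq,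
          Bialgebra.counit_mul, mul_smul]
    | add x y hx hy =>
        simp only [map_add, mul_add, hx, hy, smul_add]
  -- fix p ∈ A₁, q ∈ A₂: P₁ p = p and P₂ q = q
  have hfix₁ : ∀ p ∈ A₁, P₁ p = p := by
    intro p hp
    have := hP₁ p hp 1 (one_mem A₂)
    rw [hε] at this
    simpa using this
  have hfix₂ : ∀ q ∈ A₂, P₂ q = q := by
    intro q hq
    have := hP₂ 1 (one_mem A₁) q hq
    rw [hε] at this
    simpa using this
  -- ε on second / first factor
  set κL : A ⊗[k] A →ₗ[k] A :=
    (TensorProduct.rid k A).toLinearMap ∘ₗ ε.lTensor A with hκL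
  set κR : A ⊗[k] A →ₗ[k] A :=
    (TensorProduct.lid k A).toLinearMap ∘ₗ ε.rTensor A with hκR
  have hκLcomul : ∀ a : A, κL (Coalgebra.comul (R := k) a) = a := by
    intro a
    simp [hκL, hε, Coalgebra.lTensor_counit_comul (R := k) a]
  have hκRcomul : ∀ a : A, κR (Coalgebra.comul (R := k) a) = a := by
    intro a
    simp [hκR, hε, Coalgebra.rTensor_counit_comul (R := k) a]
  -- the key bilinear computation
  have key : ∀ (s : (⊤ : Submodule k A) ⊗[k] (Subalgebra.toSubmodule A₁))
      (t : (Subalgebra.toSubmodule A₂) ⊗[k] (⊤ : Submodule k A)),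
      LinearMap.mul' k A (TensorProduct.map P₁ P₂
        ((TensorProduct.map (⊤ : Submodule k A).subtype (Subalgebra.toSubmodule A₁).subtype s) *
         (TensorProduct.map (Subalgebra.toSubmodule A₂).subtype (⊤ : Submodule k A).subtype t)))
      = P₁ (κL (TensorProduct.map (⊤ : Submodule k A).subtype
            (Subalgebra.toSubmodule A₁).subtype s)) *
        P₂ (κR (TensorProduct.map (Subalgebra.toSubmodule A₂).subtype
            (⊤ : Submodule k A).subtype t)) := by
    intro s t
    induction s with
    | zero => simp
    | tmul x u =>
        induction t with
        | zero => simp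
        | tmul v y =>
            have hu : (u : A) ∈ A₁ := u.2
            have hv : (v : A) ∈ A₂ := v.2
            simp only [TensorProduct.map_tmul, Submodule.subtype_apply,
              Algebra.TensorProduct.tmul_mul_tmul, LinearMap.mul'_apply,
              hκL, hκR, LinearMap.comp_apply, LinearMap.lTensor_tmul,
              LinearMap.rTensor_tmul, LinearEquiv.coe_coe, TensorProduct.rid_tmul,
              TensorProduct.lid_tmul, map_smul]
            rw [L1 _ hv, L2 _ hu]
            rw [smul_mul_assoc, mul_smul_comm, smul_mul_assoc, mul_smul_comm,
              smul_smul, smul_smul, mul_comm (ε ↑v) (ε ↑u)]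
        | add t₁ t₂ h₁ h₂ =>
            simp only [map_add, mul_add, h₁, h₂, add_mul]
    | add s₁ s₂ h₁ h₂ =>
        simp only [map_add, add_mul, mul_add, h₁ , h₂]
  -- main proof
  intro a
  obtain ⟨t, rfl⟩ := hiso.2 a
  induction t with
  | zero => simp
  | tmul p q =>
      have hp : (p : A) ∈ A₁ := p.2
      have hq : (q : A) ∈ A₂ := q.2
      simp only [LinearMap.comp_apply, TensorProduct.map_tmul, LinearMap.mul'_apply,
        Submodule.subtype_apply]
      rw [Bialgebra.comul_mul]
      obtain ⟨s, hs⟩ := hA₁ _ hp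
      obtain ⟨t, ht⟩ := hA₂ _ hq
      rw [← hs, ← ht, key s t, hs, ht, hκLcomul, hκRcomul, hfix₁ _ hp, hfix₂ _ hq]
  | add x y hx hy =>
      simp only [map_add, hx, hy]
end
end

section
/- Let A be a finite dimensional Hopf algebra with subalgebras A₁ (a left coideal) and A₂ (a right coideal) such that multiplication A₁ ⊗ A₂ → A is a linear isomorphism. Then A₁^ε · A₂ (the span of products a₁a₂ with a₁ ∈ A₁ ∩ Ker ε, a₂ ∈ A₂) is a two-sided coideal of A, that is, Δ(A₁^ε A₂) ⊆ A ⊗ (A₁^ε A₂) + (A₁^ε A₂) ⊗ A. -/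
/-!
Write `E = A₁ ∩ Ker ε`. Since `A = A₁ A₂` and `E A₁ ⊆ E`, we get `E A = E A₂`. For `e ∈ E` the
left coideal property gives `Δ e - e ⊗ 1 ∈ A ⊗ E` (apply `id ⊗ (id - 1 ε)` to `Δ e ∈ A ⊗ A₁`),
and for `m ∈ A₂` we have `Δ m ∈ A₂ ⊗ A`. Hence
`Δ (e m) = (Δ e - e ⊗ 1) Δ m + (e ⊗ 1) Δ m ∈ A ⊗ E A + E A₂ ⊗ A = A ⊗ E A₂ + E A₂ ⊗ A`.
-/

open TensorProduct

noncomputable section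

section sTen

variable {k : Type*} [CommSemiring k]

section Module

variable {A B : Type*} [AddCommMonoid A] [AddCommMonoid B] [Module k A] [Module k B]
  {p p' : Submodule k A} {q q' : Submodule k B}

theorem sTen_le_iff {r : Submodule k (A ⊗[k] B)} :
    sTen k p q ≤ r ↔ ∀ m ∈ p, ∀ n ∈ q, m ⊗ₜ[k] n ∈ r := by
  rw [sTen, ← TensorProduct.mapIncl, TensorProduct.range_mapIncl, Submodule.map₂_le]
  rfl

theorem tmul_mem_sTen {m : A} {n : B} (hm : m ∈ p) (hn : n ∈ q) : m ⊗ₜ[k] n ∈ sTen k p q :=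
  sTen_le_iff.1 le_rfl m hm n hn

theorem sTen_mono (hp : p ≤ p') (hq : q ≤ q') : sTen k p q ≤ sTen k p' q' :=
  TensorProduct.range_mapIncl_mono hp hq

theorem map_sTen_le {A' B' : Type*} [AddCommMonoid A'] [AddCommMonoid B'] [Module k A']
    [Module k B'] {f : A →ₗ[k] A'} {g : B →ₗ[k] B'} {p' : Submodule k A'} {q' : Submodule k B'}
    (hf : p.map f ≤ p') (hg : q.map g ≤ q') :
    (sTen k p q).map (TensorProduct.map f g) ≤ sTen k p' q' := by
  rw [Submodule.map_le_iff_le_comap, sTen_le_iff]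
  intro m hm n hn
  exact tmul_mem_sTen (hf ⟨m, hm, rfl⟩) (hg ⟨n, hn, rfl⟩)

end Module

theorem sTen_mul_sTen_le {A B : Type*} [Semiring A] [Semiring B] [Algebra k A] [Algebra k B]
    {p r : Submodule k A} {q s : Submodule k B} :
    sTen k p q * sTen k r s ≤ sTen k (p * r) (q * s) := by
  refine Submodule.mul_le.2 fun x hx y hy => ?_
  suffices sTen k p q ≤ (sTen k (p * r) (q * s)).comap (LinearMap.mulRight k y) from this hx
  refine sTen_le_iff.2 fun m hm n hn => ?_
  suffices sTen k r s ≤ (sTen k (p * r) (q * s)).comap (LinearMap.mulLeft k (m ⊗ₜ[k] n)) from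
    this hy
  refine sTen_le_iff.2 fun a ha b hb => ?_
  simpa using tmul_mem_sTen (Submodule.mul_mem_mul hm ha) (Submodule.mul_mem_mul hn hb)

end sTen

theorem Submodule.mul_top_eq_of_mul_eq_top {k A : Type*} [CommSemiring k] [Semiring A]
    [Algebra k A] {E M₁ M₂ : Submodule k A} (hE : E * M₁ ≤ E) (h : M₁ * M₂ = ⊤) :
    E * ⊤ = E * M₂ :=
  le_antisymm (by rw [← h, ← mul_assoc]; exact mul_le_mul_left hE _)
    (mul_le_mul_right le_top _)

section Bialgebra

variable {k A : Type*} [CommRing k] [Ring A] [Bialgebra k A]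

theorem Subalgebra.inf_ker_counit_mul_le (S : Subalgebra k A) :
    (toSubmodule S ⊓ LinearMap.ker (Coalgebra.counit (R := k) (A := A))) * toSubmodule S ≤
      toSubmodule S ⊓ LinearMap.ker (Coalgebra.counit (R := k) (A := A)) := by
  refine Submodule.mul_le.2 fun e he m hm => ⟨S.mul_mem he.1 hm, ?_⟩
  have he' : Coalgebra.counit (R := k) e = 0 := he.2
  simp [Bialgebra.counit_mul, he']

theorem comul_sub_tmul_one_mem {p : Submodule k A} (hp : 1 ∈ p) {a : A}
    (ha : Coalgebra.comul (R := k) a ∈ sTen k ⊤ p) :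
    Coalgebra.comul (R := k) a - a ⊗ₜ[k] 1 ∈
      sTen k ⊤ (p ⊓ LinearMap.ker (Coalgebra.counit (R := k) (A := A))) := by
  set P : A →ₗ[k] A := LinearMap.id - Algebra.linearMap k A ∘ₗ Coalgebra.counit
  have hP : p.map P ≤ p ⊓ LinearMap.ker (Coalgebra.counit (R := k) (A := A)) := by
    rintro _ ⟨n, hn, rfl⟩
    refine ⟨p.sub_mem hn ?_, by simp [P]⟩
    simpa [Algebra.algebraMap_eq_smul_one] using p.smul_mem _ hp
  have hPa : P.lTensor A (Coalgebra.comul a) = Coalgebra.comul a - a ⊗ₜ[k] 1 := by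
    simp [P, LinearMap.lTensor_sub, LinearMap.lTensor_comp, Coalgebra.lTensor_counit_comul]
  rw [← hPa]
  exact map_sTen_le (Submodule.map_id _).le hP ⟨_, ha, rfl⟩

end Bialgebra

theorem stmt2_general (k A : Type*) [Field k] [Ring A] [HopfAlgebra k A]
    (A₁ A₂ : Subalgebra k A)
    (hiso : Function.Bijective
      ((LinearMap.mul' k A).comp
        (TensorProduct.map (Subalgebra.toSubmodule A₁).subtype
          (Subalgebra.toSubmodule A₂).subtype)))
    (hA₁ : ∀ x ∈ A₁, Coalgebra.comul (R := k) x ∈ sTen k ⊤ (Subalgebra.toSubmodule A₁))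
    (hA₂ : ∀ x ∈ A₂, Coalgebra.comul (R := k) x ∈ sTen k (Subalgebra.toSubmodule A₂) ⊤) :
    ∀ x ∈ ((Subalgebra.toSubmodule A₁ ⊓
          LinearMap.ker (Coalgebra.counit (R := k) (A := A))) *
        Subalgebra.toSubmodule A₂),
      Coalgebra.comul (R := k) x ∈
        sTen k ⊤ ((Subalgebra.toSubmodule A₁ ⊓
            LinearMap.ker (Coalgebra.counit (R := k) (A := A))) *
              Subalgebra.toSubmodule A₂)
        ⊔ sTen k ((Subalgebra.toSubmodule A₁ ⊓
            LinearMap.ker (Coalgebra.counit (R := k) (A := A))) *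
              Subalgebra.toSubmodule A₂) ⊤ := by
  set E := Subalgebra.toSubmodule A₁ ⊓ LinearMap.ker (Coalgebra.counit (R := k) (A := A))
  have hA : Subalgebra.toSubmodule A₁ * Subalgebra.toSubmodule A₂ = ⊤ := by
    rw [← Submodule.mulMap_range, Submodule.mulMap_eq_mul'_comp_mapIncl]
    exact LinearMap.range_eq_top.2 hiso.2
  have hEA : E * ⊤ = E * Subalgebra.toSubmodule A₂ :=
    Submodule.mul_top_eq_of_mul_eq_top A₁.inf_ker_counit_mul_le hA
  intro x hx
  induction hx using Submodule.mul_induction_on' with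
  | mem_mul_mem e he m hm =>
    rw [Bialgebra.comul_mul, ← sub_add_cancel (Coalgebra.comul e) (e ⊗ₜ[k] 1), add_mul]
    refine Submodule.add_mem _ (Submodule.mem_sup_left ?_) (Submodule.mem_sup_right ?_)
    · have hcomul_e := comul_sub_tmul_one_mem A₁.one_mem (hA₁ e he.1)
      exact sTen_mono le_top hEA.le (sTen_mul_sTen_le (Submodule.mul_mem_mul hcomul_e (hA₂ m hm)))
    · have he_one : e ⊗ₜ[k] (1 : A) ∈ sTen k E ⊤ := tmul_mem_sTen he Submodule.mem_top
      exact sTen_mono le_rfl le_top (sTen_mul_sTen_le (Submodule.mul_mem_mul he_one (hA₂ m hm)))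
  | add u _ v _ hu hv =>
    rw [map_add]
    exact Submodule.add_mem _ hu hv

/-- with `A` a finite dimensional Hopf algebra, `A₁` a left coideal
subalgebra, `A₂` a right coideal subalgebra, and multiplication `A₁ ⊗ A₂ → A` a
linear isomorphism, the subspace `A₁^ε · A₂` is a two-sided coideal of `A`:
`Δ(A₁^ε A₂) ⊆ A ⊗ (A₁^ε A₂) + (A₁^ε A₂) ⊗ A`. -/
theorem stmt2 (k A : Type*) [Field k] [Ring A] [HopfAlgebra k A] [FiniteDimensional k A]
    (A₁ A₂ : Subalgebra k A)
    (hiso : Function.Bijective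
      ((LinearMap.mul' k A).comp
        (TensorProduct.map (Subalgebra.toSubmodule A₁).subtype
          (Subalgebra.toSubmodule A₂).subtype)))
    (hA₁ : ∀ x ∈ A₁, Coalgebra.comul (R := k) x ∈ sTen k ⊤ (Subalgebra.toSubmodule A₁))
    (hA₂ : ∀ x ∈ A₂, Coalgebra.comul (R := k) x ∈ sTen k (Subalgebra.toSubmodule A₂) ⊤) :
    ∀ x ∈ ((Subalgebra.toSubmodule A₁ ⊓
          LinearMap.ker (Coalgebra.counit (R := k) (A := A))) *
        Subalgebra.toSubmodule A₂),
      Coalgebra.comul (R := k) x ∈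
        sTen k ⊤ ((Subalgebra.toSubmodule A₁ ⊓
            LinearMap.ker (Coalgebra.counit (R := k) (A := A))) *
              Subalgebra.toSubmodule A₂)
        ⊔ sTen k ((Subalgebra.toSubmodule A₁ ⊓
            LinearMap.ker (Coalgebra.counit (R := k) (A := A))) *
              Subalgebra.toSubmodule A₂) ⊤ :=
  stmt2_general k A A₁ A₂ hiso hA₁ hA₂
end
end

section
/- Let B be a ℤ-graded bialgebra over a field and D̂ := ∏_{i∈ℤ} D_i the completion of a ℤ-graded algebra D. On the space Hom(B, D̂) = ∏_{(i,j)} Hom(B_i, D_j), define supports and the (partially defined) convolution (f₁ * f₂)(b) := f₁(b^{(2)}) f₂(b^{(1)}). Define Hom₊(B, D̂) (resp. Hom₋(B, D̂)) as the set of f whose support is contained in S + ℕ(1,1) (resp. S + ℕ(−1,−1)) for some finite S ⊆ ℤ². Then Hom₊(B, D̂) and Hom₋(B, D̂) are each associative algebras under convolution, with unit 1_* : b ↦ ε(b)·1_D. -/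
open TensorProduct

noncomputable section

variable (k : Type*) [Field k]

section ConvolutionAlgebra

variable {B D : Type*} [Ring B] [Bialgebra k B] [Ring D] [Algebra k D]

/-- The space of "component maps" `∏_{(i,j) ∈ ℤ²} Hom(B_i, D_j)`, modelling
`Hom(B, D̂)` for a ℤ-graded bialgebra `B` and the completion `D̂ = ∏ D_j` of a
ℤ-graded algebra `D`: the `(i,j)` component records the part of a map sending
the degree-`i` piece of `B` into the degree-`j` piece of `D`. -/
abbrev HomHat (k : Type*) [Field k] (B D : Type*) [Ring B] [Bialgebra k B]
    [Ring D] [Algebra k D] : Type _ := ℤ → ℤ → (B →ₗ[k] D)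

/-- Compatibility of a component map with the gradings `π` of `B` and `𝒟` of
`D` : the `(i,j)` component factors through `π i` and lands in `𝒟 j`. -/
def Compat (π : ℤ → (B →ₗ[k] B)) (𝒟 : ℤ → Submodule k D)
    (f : HomHat k B D) : Prop :=
  ∀ i j : ℤ, (∀ b : B, f i j b ∈ 𝒟 j) ∧ (f i j).comp (π i) = f i j

/-- The support of `f` is contained in `S + ℕ·(σ,σ)` for some finite `S`. -/
def InCone (σ : ℤ) (f : HomHat k B D) : Prop :=
  ∃ S : Set (ℤ × ℤ), S.Finite ∧
    ∀ p : ℤ × ℤ, f p.1 p.2 ≠ 0 →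
      ∃ s ∈ S, ∃ n : ℕ, p = (s.1 + σ * n, s.2 + σ * n)

/-- The convolution `(f₁ * f₂)(b) = f₁(b⁽²⁾) f₂(b⁽¹⁾)`, componentwise. -/
def conv (π : ℤ → (B →ₗ[k] B)) (f g : HomHat k B D) : HomHat k B D :=
  fun i j =>
    ∑ᶠ p : ℤ × ℤ,
      (LinearMap.mul' k D).comp
        ((TensorProduct.map (f p.1 p.2) (g (i - p.1) (j - p.2))).comp
          ((TensorProduct.comm k B B).toLinearMap.comp
            ((Coalgebra.comul (R := k)).comp (π i))))

/-- The unit `1_* : b ↦ ε(b)·1_D` of the convolution algebra, componentwise. -/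
def unitF : HomHat k B D := fun i j =>
  if i = 0 ∧ j = 0 then (Algebra.linearMap k D).comp (Coalgebra.counit (R := k))
  else 0

end ConvolutionAlgebra
section AuxLemmas

set_option maxHeartbeats 1000000
set_option synthInstance.maxHeartbeats 400000

variable {B D : Type*} [Ring B] [Bialgebra k B] [Ring D] [Algebra k D]

def ConeS (σ : ℤ) (S : Set (ℤ × ℤ)) : Set (ℤ × ℤ) :=
  {p | ∃ s ∈ S, ∃ n : ℕ, p = (s.1 + σ * n, s.2 + σ * n)}

theorem coneFin2 (σ : ℤ) (hσ : σ = 1 ∨ σ = -1) (Sf Sg : Set (ℤ×ℤ))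
    (hf : Sf.Finite) (hg : Sg.Finite) (w : ℤ × ℤ) :
    {p : ℤ × ℤ | p ∈ ConeS σ Sf ∧ ((w.1 - p.1, w.2 - p.2) : ℤ × ℤ) ∈ ConeS σ Sg}.Finite := by
  apply Set.Finite.subset
    (hf.biUnion (fun s _ => hg.biUnion (fun t _ =>
      ((Set.finite_Iic ((σ * (w.1 - s.1 - t.1)).toNat)).image
        (fun n : ℕ => ((s.1 + σ * n, s.2 + σ * n) : ℤ × ℤ))))))
  rintro p ⟨⟨s, hs, n, rfl⟩, ⟨t, ht, m, hq⟩⟩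
  refine Set.mem_biUnion hs (Set.mem_biUnion ht ⟨n, ?_, rfl⟩)
  have h1 := congrArg Prod.fst hq
  simp only [Prod.fst] at h1
  simp only [Set.mem_Iic]
  rcases hσ with rfl | rfl <;> omega

theorem coneFin3 (σ : ℤ) (hσ : σ = 1 ∨ σ = -1) (Sf Sg Sh : Set (ℤ×ℤ))
    (hf : Sf.Finite) (hg : Sg.Finite) (hh : Sh.Finite) (w : ℤ × ℤ) :
    {z : (ℤ×ℤ)×(ℤ×ℤ) | z.2 ∈ ConeS σ Sf ∧
      ((z.1.1 - z.2.1, z.1.2 - z.2.2) : ℤ×ℤ) ∈ ConeS σ Sg ∧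
      ((w.1 - z.1.1, w.2 - z.1.2) : ℤ×ℤ) ∈ ConeS σ Sh}.Finite := by
  apply Set.Finite.subset
    (hf.biUnion (fun s _ => hg.biUnion (fun t _ => hh.biUnion (fun e _ =>
      (((Set.finite_Iic ((σ * (w.1 - s.1 - t.1 - e.1)).toNat)).prod
          (Set.finite_Iic ((σ * (w.1 - s.1 - t.1 - e.1)).toNat))).image
        (fun nm : ℕ × ℕ =>
          (((s.1 + σ * nm.1 + (t.1 + σ * nm.2), s.2 + σ * nm.1 + (t.2 + σ * nm.2)) : ℤ×ℤ),
           ((s.1 + σ * nm.1, s.2 + σ * nm.1) : ℤ×ℤ))))))))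
  rintro ⟨z1, z2⟩ ⟨⟨s, hs, n, rfl⟩, ⟨t, ht, m, hq⟩, ⟨e, he, l, hr⟩⟩
  refine Set.mem_biUnion hs (Set.mem_biUnion ht (Set.mem_biUnion he ⟨(n, m), ?_, ?_⟩))
  · have h1 := congrArg Prod.fst hq
    have h2 := congrArg Prod.fst hr
    simp only [Prod.fst] at h1 h2
    constructor <;> · simp only [Set.mem_Iic]; rcases hσ with rfl | rfl <;> omega
  · have h1 := congrArg Prod.fst hq
    have h1' := congrArg Prod.snd hq
    simp only [Prod.fst, Prod.snd] at h1 h1'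
    have : z1 = (s.1 + σ * n + (t.1 + σ * m), s.2 + σ * n + (t.2 + σ * m)) := by
      apply Prod.ext <;> simp <;> omega
    rw [this]

theorem star_pt (b : B) :
    (TensorProduct.assoc k B B B)
      ((LinearMap.rTensor B (TensorProduct.comm k B B).toLinearMap)
        ((LinearMap.rTensor B (Coalgebra.comul (R := k)))
          ((TensorProduct.comm k B B) (Coalgebra.comul (R := k) b))))
      = (LinearMap.lTensor B (TensorProduct.comm k B B).toLinearMap)
          ((LinearMap.lTensor B (Coalgebra.comul (R := k)))
            ((TensorProduct.comm k B B) (Coalgebra.comul (R := k) b))) := by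
  have h1 : ∀ u : B ⊗[k] B,
      (LinearMap.rTensor B (Coalgebra.comul (R := k))) ((TensorProduct.comm k B B) u)
      = (TensorProduct.comm k B (B ⊗[k] B)) ((LinearMap.lTensor B (Coalgebra.comul (R := k))) u) := by
    intro u
    induction u with
    | zero => simp only [map_zero]
    | tmul x y => simp only [comm_tmul, assoc_tmul, LinearMap.rTensor_tmul,
        LinearMap.lTensor_tmul]
    | add x y hx hy => simp only [map_add, hx, hy]
  have h2 : ∀ u : B ⊗[k] B,
      (LinearMap.lTensor B (Coalgebra.comul (R := k))) ((TensorProduct.comm k B B) u)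
      = (TensorProduct.comm k (B ⊗[k] B) B) ((LinearMap.rTensor B (Coalgebra.comul (R := k))) u) := by
    intro u
    induction u with
    | zero => simp only [map_zero]
    | tmul x y => simp only [comm_tmul, assoc_tmul, LinearMap.rTensor_tmul,
        LinearMap.lTensor_tmul]
    | add x y hx hy => simp only [map_add, hx, hy]
  have h3 : ∀ v : (B ⊗[k] B) ⊗[k] B,
      (TensorProduct.assoc k B B B)
        ((LinearMap.rTensor B (TensorProduct.comm k B B).toLinearMap)
          ((TensorProduct.comm k B (B ⊗[k] B)) ((TensorProduct.assoc k B B B) v)))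
      = (LinearMap.lTensor B (TensorProduct.comm k B B).toLinearMap)
          ((TensorProduct.comm k (B ⊗[k] B) B) v) := by
    intro v
    induction v with
    | zero => simp only [map_zero]
    | tmul w z =>
      induction w with
      | zero => simp only [zero_tmul, map_zero]
      | tmul x y =>
        simp only [comm_tmul, assoc_tmul, LinearMap.rTensor_tmul, LinearMap.lTensor_tmul,
          LinearEquiv.coe_coe]
      | add x y hx hy => simp only [add_tmul, map_add, hx, hy]
    | add x y hx hy => simp only [map_add, hx, hy]
  rw [h1, ← Coalgebra.coassoc_apply, h3, ← h2]

theorem conv_core_assoc (F G H : B →ₗ[k] D) :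
    (LinearMap.mul' k D).comp ((TensorProduct.map
        ((LinearMap.mul' k D).comp ((TensorProduct.map F G).comp
          ((TensorProduct.comm k B B).toLinearMap.comp (Coalgebra.comul (R := k))))) H).comp
      ((TensorProduct.comm k B B).toLinearMap.comp (Coalgebra.comul (R := k))))
    = (LinearMap.mul' k D).comp ((TensorProduct.map F
        ((LinearMap.mul' k D).comp ((TensorProduct.map G H).comp
          ((TensorProduct.comm k B B).toLinearMap.comp (Coalgebra.comul (R := k)))))).comp
      ((TensorProduct.comm k B B).toLinearMap.comp (Coalgebra.comul (R := k)))) := by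
  ext b
  have claim1 : ∀ u : B ⊗[k] B,
      LinearMap.mul' k D (TensorProduct.map
        ((LinearMap.mul' k D).comp ((TensorProduct.map F G).comp
          ((TensorProduct.comm k B B).toLinearMap.comp (Coalgebra.comul (R := k))))) H u)
      = LinearMap.mul' k D ((LinearMap.rTensor D (LinearMap.mul' k D))
          ((TensorProduct.map (TensorProduct.map F G) H)
            ((LinearMap.rTensor B (TensorProduct.comm k B B).toLinearMap)
              ((LinearMap.rTensor B (Coalgebra.comul (R := k))) u)))) := by
    intro u
    induction u with
    | zero => simp only [map_zero]
    | tmul x y =>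
      simp only [TensorProduct.map_tmul, LinearMap.rTensor_tmul, LinearMap.coe_comp,
        Function.comp_apply, LinearEquiv.coe_coe]
    | add x y hx hy => simp only [map_add, hx, hy]
  have claim2 : ∀ u : B ⊗[k] B,
      LinearMap.mul' k D (TensorProduct.map F
        ((LinearMap.mul' k D).comp ((TensorProduct.map G H).comp
          ((TensorProduct.comm k B B).toLinearMap.comp (Coalgebra.comul (R := k))))) u)
      = LinearMap.mul' k D ((LinearMap.lTensor D (LinearMap.mul' k D))
          ((TensorProduct.map F (TensorProduct.map G H))
            ((LinearMap.lTensor B (TensorProduct.comm k B B).toLinearMap)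
              ((LinearMap.lTensor B (Coalgebra.comul (R := k))) u)))) := by
    intro u
    induction u with
    | zero => simp only [map_zero]
    | tmul x y =>
      simp only [TensorProduct.map_tmul, LinearMap.lTensor_tmul, LinearMap.coe_comp,
        Function.comp_apply, LinearEquiv.coe_coe]
    | add x y hx hy => simp only [map_add, hx, hy]
  have claim3 : ∀ v : (B ⊗[k] B) ⊗[k] B,
      LinearMap.mul' k D ((LinearMap.rTensor D (LinearMap.mul' k D))
        ((TensorProduct.map (TensorProduct.map F G) H) v))
      = LinearMap.mul' k D ((LinearMap.lTensor D (LinearMap.mul' k D))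
          ((TensorProduct.map F (TensorProduct.map G H)) ((TensorProduct.assoc k B B B) v))) := by
    intro v
    induction v with
    | zero => simp only [map_zero]
    | tmul w z =>
      induction w with
      | zero => simp only [zero_tmul, map_zero]
      | tmul x y =>
        simp only [TensorProduct.map_tmul, assoc_tmul, LinearMap.rTensor_tmul,
          LinearMap.lTensor_tmul, LinearMap.mul'_apply, mul_assoc]
      | add x y hx hy => simp only [add_tmul, map_add, hx, hy]
    | add x y hx hy => simp only [map_add, hx, hy]
  simp only [LinearMap.coe_comp, Function.comp_apply, LinearEquiv.coe_coe]
  rw [claim1, claim2, claim3, star_pt]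

theorem conv_core_unit_right (F : B →ₗ[k] D) :
    (LinearMap.mul' k D).comp ((TensorProduct.map F
        ((Algebra.linearMap k D).comp (Coalgebra.counit (R := k)))).comp
      ((TensorProduct.comm k B B).toLinearMap.comp (Coalgebra.comul (R := k))))
    = F := by
  ext b
  have claim : ∀ u : B ⊗[k] B,
      LinearMap.mul' k D (TensorProduct.map F
        ((Algebra.linearMap k D).comp (Coalgebra.counit (R := k)))
          ((TensorProduct.comm k B B) u))
      = F ((TensorProduct.lid k B) ((LinearMap.rTensor B (Coalgebra.counit (R := k))) u)) := by
    intro u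
    induction u with
    | zero => simp only [map_zero]
    | tmul x y =>
      simp only [comm_tmul, TensorProduct.map_tmul, LinearMap.rTensor_tmul, lid_tmul,
        LinearMap.coe_comp, Function.comp_apply, Algebra.linearMap_apply, LinearMap.mul'_apply,
        map_smul]
      rw [Algebra.smul_def, Algebra.commutes]
    | add x y hx hy => simp only [map_add, hx, hy]
  simp only [LinearMap.coe_comp, Function.comp_apply, LinearEquiv.coe_coe]
  rw [claim, Coalgebra.rTensor_counit_comul]
  simp

theorem conv_core_unit_left (F : B →ₗ[k] D) :
    (LinearMap.mul' k D).comp ((TensorProduct.map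
        ((Algebra.linearMap k D).comp (Coalgebra.counit (R := k))) F).comp
      ((TensorProduct.comm k B B).toLinearMap.comp (Coalgebra.comul (R := k))))
    = F := by
  ext b
  have claim : ∀ u : B ⊗[k] B,
      LinearMap.mul' k D (TensorProduct.map
        ((Algebra.linearMap k D).comp (Coalgebra.counit (R := k))) F
          ((TensorProduct.comm k B B) u))
      = F ((TensorProduct.rid k B) ((LinearMap.lTensor B (Coalgebra.counit (R := k))) u)) := by
    intro u
    induction u with
    | zero => simp only [map_zero]
    | tmul x y =>
      simp only [comm_tmul, TensorProduct.map_tmul, LinearMap.lTensor_tmul, rid_tmul,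
        LinearMap.coe_comp, Function.comp_apply, Algebra.linearMap_apply, LinearMap.mul'_apply,
        map_smul]
      rw [Algebra.smul_def]
    | add x y hx hy => simp only [map_add, hx, hy]
  simp only [LinearMap.coe_comp, Function.comp_apply, LinearEquiv.coe_coe]
  rw [claim, Coalgebra.lTensor_counit_comul]
  simp

theorem gradedComul_pt (π : ℤ → (B →ₗ[k] B))
    (hπ_fin : ∀ b : B, (Function.support fun i : ℤ => π i b).Finite)
    (hπ_sum : ∀ b : B, (∑ᶠ i : ℤ, π i b) = b)
    (hΔ_deg : ∀ (i i₁ i₂ : ℤ) (b : B), i₁ + i₂ ≠ i →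
      TensorProduct.map (π i₁) (π i₂) (Coalgebra.comul (R := k) (π i b)) = 0)
    (a c : ℤ) (b : B) :
    TensorProduct.map (π a) (π c) (Coalgebra.comul (R := k) (π (a + c) b))
      = TensorProduct.map (π a) (π c) (Coalgebra.comul (R := k) b) := by
  set F : B →ₗ[k] B ⊗[k] B := (TensorProduct.map (π a) (π c)).comp (Coalgebra.comul (R := k))
    with hF
  have h1 : ∀ x : B, TensorProduct.map (π a) (π c) (Coalgebra.comul (R := k) x) = F x := by
    intro x; simp [hF]
  rw [h1, h1]
  have h3 : F (∑ᶠ i : ℤ, π i b) = ∑ᶠ i : ℤ, F (π i b) :=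
    AddMonoidHom.map_finsum F.toAddMonoidHom (hπ_fin b)
  conv_rhs => rw [← hπ_sum b, h3]
  have h2 : ∀ i : ℤ, i ≠ a + c → F (π i b) = 0 := by
    intro i hi
    exact hΔ_deg i a c b fun h => hi h.symm
  rw [finsum_eq_single _ (a + c) h2]

theorem conv_term_dropPi (π : ℤ → (B →ₗ[k] B))
    (hπ_fin : ∀ b : B, (Function.support fun i : ℤ => π i b).Finite)
    (hπ_sum : ∀ b : B, (∑ᶠ i : ℤ, π i b) = b)
    (hΔ_deg : ∀ (i i₁ i₂ : ℤ) (b : B), i₁ + i₂ ≠ i →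
      TensorProduct.map (π i₁) (π i₂) (Coalgebra.comul (R := k) (π i b)) = 0)
    (a c i : ℤ) (hi : a + c = i) (F G : B →ₗ[k] D)
    (hF : F.comp (π a) = F) (hG : G.comp (π c) = G) :
    (LinearMap.mul' k D).comp ((TensorProduct.map F G).comp
      ((TensorProduct.comm k B B).toLinearMap.comp
        ((Coalgebra.comul (R := k)).comp (π i))))
    = (LinearMap.mul' k D).comp ((TensorProduct.map F G).comp
        ((TensorProduct.comm k B B).toLinearMap.comp (Coalgebra.comul (R := k)))) := by
  have habs : ∀ u : B ⊗[k] B,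
      TensorProduct.map F G u = TensorProduct.map F G (TensorProduct.map (π a) (π c) u) := by
    intro u
    induction u with
    | zero => simp only [map_zero]
    | tmul x y =>
      simp only [TensorProduct.map_tmul]
      rw [← LinearMap.congr_fun hF x, ← LinearMap.congr_fun hG y]
      rfl
    | add x y hx hy => simp only [map_add, ← hx, ← hy]
  ext b
  simp only [LinearMap.coe_comp, Function.comp_apply, LinearEquiv.coe_coe]
  rw [habs ((TensorProduct.comm k B B) (Coalgebra.comul (R := k) (π i b))),
    TensorProduct.map_comm,
    show π i b = π (c + a) b by rw [add_comm c a, hi],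
    gradedComul_pt k π hπ_fin hπ_sum hΔ_deg c a b,
    ← TensorProduct.map_comm,
    ← habs ((TensorProduct.comm k B B) (Coalgebra.comul (R := k) b))]

def cTerm (f g : HomHat k B D) (i j : ℤ) (p : ℤ × ℤ) : B →ₗ[k] D :=
  (LinearMap.mul' k D).comp
    ((TensorProduct.map (f p.1 p.2) (g (i - p.1) (j - p.2))).comp
      ((TensorProduct.comm k B B).toLinearMap.comp (Coalgebra.comul (R := k))))

theorem cTerm_eq_zero_left {f g : HomHat k B D} {i j : ℤ} {p : ℤ × ℤ}
    (h : f p.1 p.2 = 0) : cTerm k f g i j p = 0 := by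
  unfold cTerm
  rw [h]
  have : TensorProduct.map (0 : B →ₗ[k] D) (g (i - p.1) (j - p.2)) = 0 :=
    TensorProduct.ext' (by simp)
  rw [this]
  simp

theorem cTerm_eq_zero_right {f g : HomHat k B D} {i j : ℤ} {p : ℤ × ℤ}
    (h : g (i - p.1) (j - p.2) = 0) : cTerm k f g i j p = 0 := by
  unfold cTerm
  rw [h]
  have : TensorProduct.map (f p.1 p.2) (0 : B →ₗ[k] D) = 0 :=
    TensorProduct.ext' (by simp)
  rw [this]
  simp

theorem convEq (π : ℤ → (B →ₗ[k] B))
    (hπ_fin : ∀ b : B, (Function.support fun i : ℤ => π i b).Finite)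
    (hπ_sum : ∀ b : B, (∑ᶠ i : ℤ, π i b) = b)
    (hΔ_deg : ∀ (i i₁ i₂ : ℤ) (b : B), i₁ + i₂ ≠ i →
      TensorProduct.map (π i₁) (π i₂) (Coalgebra.comul (R := k) (π i b)) = 0)
    {𝒟 : ℤ → Submodule k D} {f g : HomHat k B D}
    (hf : Compat k π 𝒟 f) (hg : Compat k π 𝒟 g) (i j : ℤ) :
    conv k π f g i j = ∑ᶠ p : ℤ × ℤ, cTerm k f g i j p := by
  unfold conv
  refine finsum_congr fun p => ?_
  have h1 : (Coalgebra.comul (R := k)).comp (π i)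
      = (Coalgebra.comul (R := k)) ∘ₗ (π i) := rfl
  exact conv_term_dropPi k π hπ_fin hπ_sum hΔ_deg p.1 (i - p.1) i (by ring)
    (f p.1 p.2) (g (i - p.1) (j - p.2)) ((hf p.1 p.2).2) ((hg (i - p.1) (j - p.2)).2)

theorem convForm_zero_left (Y : B →ₗ[k] D) :
    (LinearMap.mul' k D).comp ((TensorProduct.map (0 : B →ₗ[k] D) Y).comp
      ((TensorProduct.comm k B B).toLinearMap.comp (Coalgebra.comul (R := k)))) = 0 := by
  have : TensorProduct.map (0 : B →ₗ[k] D) Y = 0 := TensorProduct.ext' (by simp)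
  rw [this]; simp

theorem convForm_zero_right (X : B →ₗ[k] D) :
    (LinearMap.mul' k D).comp ((TensorProduct.map X (0 : B →ₗ[k] D)).comp
      ((TensorProduct.comm k B B).toLinearMap.comp (Coalgebra.comul (R := k)))) = 0 := by
  have : TensorProduct.map X (0 : B →ₗ[k] D) = 0 := TensorProduct.ext' (by simp)
  rw [this]; simp

theorem convCompat (π : ℤ → (B →ₗ[k] B)) (𝒟 : ℤ → Submodule k D)
    (hπ_idem : ∀ i j : ℤ, (π i).comp (π j) = if i = j then π i else 0)
    (hπ_fin : ∀ b : B, (Function.support fun i : ℤ => π i b).Finite)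
    (hπ_sum : ∀ b : B, (∑ᶠ i : ℤ, π i b) = b)
    (hΔ_deg : ∀ (i i₁ i₂ : ℤ) (b : B), i₁ + i₂ ≠ i →
      TensorProduct.map (π i₁) (π i₂) (Coalgebra.comul (R := k) (π i b)) = 0)
    (h𝒟_mul : ∀ i j : ℤ, 𝒟 i * 𝒟 j ≤ 𝒟 (i + j))
    (σ : ℤ) (hσ : σ = 1 ∨ σ = -1)
    {f g : HomHat k B D} (hf : Compat k π 𝒟 f) (hcf : InCone k σ f)
    (hg : Compat k π 𝒟 g) (hcg : InCone k σ g) :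
    Compat k π 𝒟 (conv k π f g) := by
  obtain ⟨Sf, hSf, hfS⟩ := hcf
  obtain ⟨Sg, hSg, hgS⟩ := hcg
  intro i j
  have hfin : {p : ℤ × ℤ | p ∈ ConeS σ Sf ∧
      ((i - p.1, j - p.2) : ℤ × ℤ) ∈ ConeS σ Sg}.Finite :=
    coneFin2 σ hσ Sf Sg hSf hSg (i, j)
  have hsupp : Function.support (fun p => cTerm k f g i j p) ⊆ ↑hfin.toFinset := by
    intro p hp
    simp only [Set.Finite.coe_toFinset, Set.mem_setOf_eq]
    refine ⟨hfS p ?_, hgS (i - p.1, j - p.2) ?_⟩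
    · intro h0; exact hp (cTerm_eq_zero_left k h0)
    · intro h0; exact hp (cTerm_eq_zero_right k h0)
  have hconv : conv k π f g i j = ∑ p ∈ hfin.toFinset, cTerm k f g i j p := by
    rw [convEq k π hπ_fin hπ_sum hΔ_deg hf hg i j]
    exact finsum_eq_finset_sum_of_support_subset _ hsupp
  constructor
  · intro b
    rw [hconv, LinearMap.sum_apply]
    apply Submodule.sum_mem
    intro p _
    have hmem : ∀ u : B ⊗[k] B,
        LinearMap.mul' k D
          (TensorProduct.map (f p.1 p.2) (g (i - p.1) (j - p.2)) u) ∈ 𝒟 (p.2 + (j - p.2)) := by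
      intro u
      induction u with
      | zero => simp only [map_zero]; exact zero_mem _
      | tmul x y =>
        simp only [TensorProduct.map_tmul, LinearMap.mul'_apply]
        exact h𝒟_mul _ _ (Submodule.mul_mem_mul ((hf p.1 p.2).1 x) ((hg (i - p.1) (j - p.2)).1 y))
      | add x y hx hy => simp only [map_add]; exact add_mem hx hy
    have h2 := hmem ((TensorProduct.comm k B B) (Coalgebra.comul (R := k) b))
    rw [show p.2 + (j - p.2) = j by ring] at h2
    simpa [cTerm] using h2
  · have hii : ∀ b : B, π i (π i b) = π i b := by
      intro b
      have := LinearMap.congr_fun (hπ_idem i i) b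
      simpa using this
    rw [hconv]
    ext b
    simp only [LinearMap.coe_comp, Function.comp_apply, LinearMap.sum_apply]
    refine Finset.sum_congr rfl fun p _ => ?_
    have hdrop := conv_term_dropPi k π hπ_fin hπ_sum hΔ_deg p.1 (i - p.1) i (by ring)
      (f p.1 p.2) (g (i - p.1) (j - p.2)) ((hf p.1 p.2).2) ((hg (i - p.1) (j - p.2)).2)
    have h5 := LinearMap.congr_fun hdrop b
    simp only [cTerm, LinearMap.coe_comp, Function.comp_apply, LinearEquiv.coe_coe] at h5 ⊢
    exact h5

theorem convInCone (π : ℤ → (B →ₗ[k] B)) (𝒟 : ℤ → Submodule k D)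
    (hπ_fin : ∀ b : B, (Function.support fun i : ℤ => π i b).Finite)
    (hπ_sum : ∀ b : B, (∑ᶠ i : ℤ, π i b) = b)
    (hΔ_deg : ∀ (i i₁ i₂ : ℤ) (b : B), i₁ + i₂ ≠ i →
      TensorProduct.map (π i₁) (π i₂) (Coalgebra.comul (R := k) (π i b)) = 0)
    (σ : ℤ)
    {f g : HomHat k B D} (hf : Compat k π 𝒟 f) (hcf : InCone k σ f)
    (hg : Compat k π 𝒟 g) (hcg : InCone k σ g) :
    InCone k σ (conv k π f g) := by
  obtain ⟨Sf, hSf, hfS⟩ := hcf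
  obtain ⟨Sg, hSg, hgS⟩ := hcg
  refine ⟨Set.image2 (fun s t => ((s.1 + t.1, s.2 + t.2) : ℤ × ℤ)) Sf Sg,
    Set.Finite.image2 _ hSf hSg, ?_⟩
  intro p hp
  rw [convEq k π hπ_fin hπ_sum hΔ_deg hf hg p.1 p.2] at hp
  have hq : ∃ q : ℤ × ℤ, cTerm k f g p.1 p.2 q ≠ 0 := by
    by_contra hc
    push_neg at hc
    exact hp (finsum_eq_zero_of_forall_eq_zero hc)
  obtain ⟨q, hq⟩ := hq
  have hfq : f q.1 q.2 ≠ 0 := fun h0 => hq (cTerm_eq_zero_left k h0)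
  have hgq : g (p.1 - q.1) (p.2 - q.2) ≠ 0 := fun h0 => hq (cTerm_eq_zero_right k h0)
  obtain ⟨s, hs, n, hn⟩ := hfS q hfq
  obtain ⟨t, ht, m2, hm⟩ := hgS (p.1 - q.1, p.2 - q.2) hgq
  refine ⟨(s.1 + t.1, s.2 + t.2), Set.mem_image2_of_mem hs ht, n + m2, ?_⟩
  have h1 := congrArg Prod.fst hn
  have h2 := congrArg Prod.snd hn
  have h3 := congrArg Prod.fst hm
  have h4 := congrArg Prod.snd hm
  simp only [Prod.fst, Prod.snd] at h1 h2 h3 h4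
  apply Prod.ext <;> simp only [Prod.fst, Prod.snd] <;> push_cast <;> linarith

theorem convUnitRight (π : ℤ → (B →ₗ[k] B)) (𝒟 : ℤ → Submodule k D)
    {f : HomHat k B D} (hf : Compat k π 𝒟 f) :
    conv k π f (unitF k) = f := by
  funext i j
  unfold conv
  have hzero : ∀ p : ℤ × ℤ, p ≠ ((i, j) : ℤ × ℤ) →
      (LinearMap.mul' k D).comp
        ((TensorProduct.map (f p.1 p.2) (unitF k (i - p.1) (j - p.2))).comp
          ((TensorProduct.comm k B B).toLinearMap.comp
            ((Coalgebra.comul (R := k)).comp (π i)))) = 0 := by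
    intro p hp
    have h0 : unitF k (i - p.1) (j - p.2) = (0 : B →ₗ[k] D) := by
      unfold unitF
      rw [if_neg]
      rintro ⟨h1, h2⟩
      exact hp (Prod.ext (by omega) (by omega))
    rw [h0]
    have h1 : TensorProduct.map (f p.1 p.2) (0 : B →ₗ[k] D) = 0 :=
      TensorProduct.ext' (by simp)
    rw [h1]
    simp
  have hsingle := finsum_eq_single
    (fun p : ℤ × ℤ => (LinearMap.mul' k D).comp
      ((TensorProduct.map (f p.1 p.2) (unitF k (i - p.1) (j - p.2))).comp
        ((TensorProduct.comm k B B).toLinearMap.comp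
          ((Coalgebra.comul (R := k)).comp (π i))))) ((i, j) : ℤ × ℤ) hzero
  rw [hsingle]
  show (LinearMap.mul' k D).comp
      ((TensorProduct.map (f i j) (unitF k (i - i) (j - j))).comp
        ((TensorProduct.comm k B B).toLinearMap.comp
          ((Coalgebra.comul (R := k)).comp (π i)))) = f i j
  have hu : unitF k (B := B) (D := D) (i - i) (j - j)
      = (Algebra.linearMap k D).comp (Coalgebra.counit (R := k)) := by
    simp [unitF]
  rw [hu]
  ext b
  simp only [LinearMap.coe_comp, Function.comp_apply, LinearEquiv.coe_coe]
  have h1 := LinearMap.congr_fun (conv_core_unit_right k (f i j)) (π i b)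
  simp only [LinearMap.coe_comp, Function.comp_apply, LinearEquiv.coe_coe] at h1
  rw [h1]
  exact LinearMap.congr_fun (hf i j).2 b

theorem convUnitLeft (π : ℤ → (B →ₗ[k] B)) (𝒟 : ℤ → Submodule k D)
    {f : HomHat k B D} (hf : Compat k π 𝒟 f) :
    conv k π (unitF k) f = f := by
  funext i j
  unfold conv
  have hzero : ∀ p : ℤ × ℤ, p ≠ ((0, 0) : ℤ × ℤ) →
      (LinearMap.mul' k D).comp
        ((TensorProduct.map (unitF k p.1 p.2) (f (i - p.1) (j - p.2))).comp
          ((TensorProduct.comm k B B).toLinearMap.comp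
            ((Coalgebra.comul (R := k)).comp (π i)))) = 0 := by
    intro p hp
    have h0 : unitF k p.1 p.2 = (0 : B →ₗ[k] D) := by
      unfold unitF
      rw [if_neg]
      rintro ⟨h1, h2⟩
      exact hp (Prod.ext h1 h2)
    rw [h0]
    have h1 : TensorProduct.map (0 : B →ₗ[k] D) (f (i - p.1) (j - p.2)) = 0 :=
      TensorProduct.ext' (by simp)
    rw [h1]
    simp
  have hsingle := finsum_eq_single
    (fun p : ℤ × ℤ => (LinearMap.mul' k D).comp
      ((TensorProduct.map (unitF k p.1 p.2) (f (i - p.1) (j - p.2))).comp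
        ((TensorProduct.comm k B B).toLinearMap.comp
          ((Coalgebra.comul (R := k)).comp (π i))))) ((0, 0) : ℤ × ℤ) hzero
  rw [hsingle]
  show (LinearMap.mul' k D).comp
      ((TensorProduct.map (unitF k (0 : ℤ) (0 : ℤ)) (f (i - 0) (j - 0))).comp
        ((TensorProduct.comm k B B).toLinearMap.comp
          ((Coalgebra.comul (R := k)).comp (π i)))) = f i j
  have hu' : unitF k (B := B) (D := D) (0 : ℤ) (0 : ℤ)
      = (Algebra.linearMap k D).comp (Coalgebra.counit (R := k)) := by
    simp [unitF]
  rw [hu', sub_zero, sub_zero]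
  ext b
  simp only [LinearMap.coe_comp, Function.comp_apply, LinearEquiv.coe_coe]
  have h1 := LinearMap.congr_fun (conv_core_unit_left k (f i j)) (π i b)
  simp only [LinearMap.coe_comp, Function.comp_apply, LinearEquiv.coe_coe] at h1
  rw [h1]
  exact LinearMap.congr_fun (hf i j).2 b

theorem push_left (H' : B →ₗ[k] D) {F : ℤ × ℤ → (B →ₗ[k] D)}
    (hfin : (Function.support F).Finite) :
    (LinearMap.mul' k D).comp ((TensorProduct.map (∑ᶠ q : ℤ × ℤ, F q) H').comp
      ((TensorProduct.comm k B B).toLinearMap.comp (Coalgebra.comul (R := k))))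
    = ∑ᶠ q : ℤ × ℤ, (LinearMap.mul' k D).comp ((TensorProduct.map (F q) H').comp
        ((TensorProduct.comm k B B).toLinearMap.comp (Coalgebra.comul (R := k)))) := by
  set Φ : (B →ₗ[k] D) →ₗ[k] (B →ₗ[k] D) :=
    (LinearMap.lcomp k D
        ((TensorProduct.comm k B B).toLinearMap.comp (Coalgebra.comul (R := k)))).comp
      ((LinearMap.llcomp k (B ⊗[k] B) (D ⊗[k] D) D (LinearMap.mul' k D)).comp
        ((TensorProduct.mapBilinear (RingHom.id k) B B D D).flip H')) with hΦdef
  have hΦ : ∀ X : B →ₗ[k] D, Φ X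
      = (LinearMap.mul' k D).comp ((TensorProduct.map X H').comp
          ((TensorProduct.comm k B B).toLinearMap.comp (Coalgebra.comul (R := k)))) :=
    fun X => rfl
  have hmap : Φ (∑ᶠ q : ℤ × ℤ, F q) = ∑ᶠ q : ℤ × ℤ, Φ (F q) :=
    AddMonoidHom.map_finsum Φ.toAddMonoidHom hfin
  rw [← hΦ, hmap]
  exact finsum_congr fun q => hΦ (F q)

theorem push_right (F' : B →ₗ[k] D) {F : ℤ × ℤ → (B →ₗ[k] D)}
    (hfin : (Function.support F).Finite) :
    (LinearMap.mul' k D).comp ((TensorProduct.map F' (∑ᶠ q : ℤ × ℤ, F q)).comp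
      ((TensorProduct.comm k B B).toLinearMap.comp (Coalgebra.comul (R := k))))
    = ∑ᶠ q : ℤ × ℤ, (LinearMap.mul' k D).comp ((TensorProduct.map F' (F q)).comp
        ((TensorProduct.comm k B B).toLinearMap.comp (Coalgebra.comul (R := k)))) := by
  set Φ : (B →ₗ[k] D) →ₗ[k] (B →ₗ[k] D) :=
    (LinearMap.lcomp k D
        ((TensorProduct.comm k B B).toLinearMap.comp (Coalgebra.comul (R := k)))).comp
      ((LinearMap.llcomp k (B ⊗[k] B) (D ⊗[k] D) D (LinearMap.mul' k D)).comp
        ((TensorProduct.mapBilinear (RingHom.id k) B B D D) F')) with hΦdef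
  have hΦ : ∀ X : B →ₗ[k] D, Φ X
      = (LinearMap.mul' k D).comp ((TensorProduct.map F' X).comp
          ((TensorProduct.comm k B B).toLinearMap.comp (Coalgebra.comul (R := k)))) :=
    fun X => rfl
  have hmap : Φ (∑ᶠ q : ℤ × ℤ, F q) = ∑ᶠ q : ℤ × ℤ, Φ (F q) :=
    AddMonoidHom.map_finsum Φ.toAddMonoidHom hfin
  rw [← hΦ, hmap]
  exact finsum_congr fun q => hΦ (F q)

theorem cTermSuppFinite (σ : ℤ) (hσ : σ = 1 ∨ σ = -1) {f g : HomHat k B D}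
    {Sf Sg : Set (ℤ × ℤ)} (hSf : Sf.Finite) (hSg : Sg.Finite)
    (hfS : ∀ p : ℤ × ℤ, f p.1 p.2 ≠ 0 → p ∈ ConeS σ Sf)
    (hgS : ∀ p : ℤ × ℤ, g p.1 p.2 ≠ 0 → p ∈ ConeS σ Sg)
    (i j : ℤ) :
    (Function.support fun q => cTerm k f g i j q).Finite := by
  apply Set.Finite.subset (coneFin2 σ hσ Sf Sg hSf hSg (i, j))
  intro q hq
  refine ⟨hfS q ?_, hgS (i - q.1, j - q.2) ?_⟩
  · intro h0; exact hq (cTerm_eq_zero_left k h0)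
  · intro h0; exact hq (cTerm_eq_zero_right k h0)

def LtD (f g h : HomHat k B D) (i j : ℤ) (z : (ℤ × ℤ) × (ℤ × ℤ)) : B →ₗ[k] D :=
  (LinearMap.mul' k D).comp
    ((TensorProduct.map (cTerm k f g z.1.1 z.1.2 z.2) (h (i - z.1.1) (j - z.1.2))).comp
      ((TensorProduct.comm k B B).toLinearMap.comp (Coalgebra.comul (R := k))))

def RtD (f g h : HomHat k B D) (i j : ℤ) (z : (ℤ × ℤ) × (ℤ × ℤ)) : B →ₗ[k] D :=
  (LinearMap.mul' k D).comp
    ((TensorProduct.map (f z.1.1 z.1.2) (cTerm k g h (i - z.1.1) (j - z.1.2) z.2)).comp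
      ((TensorProduct.comm k B B).toLinearMap.comp (Coalgebra.comul (R := k))))

theorem key_exchange (f g h : HomHat k B D) (i j : ℤ) (z : (ℤ × ℤ) × (ℤ × ℤ)) :
    LtD k f g h i j z
      = RtD k f g h i j (z.2, (z.1.1 - z.2.1, z.1.2 - z.2.2)) := by
  have e1 : i - z.2.1 - (z.1.1 - z.2.1) = i - z.1.1 := by ring
  have e2 : j - z.2.2 - (z.1.2 - z.2.2) = j - z.1.2 := by ring
  simp only [LtD, RtD, cTerm, e1, e2]
  exact conv_core_assoc k (f z.2.1 z.2.2) (g (z.1.1 - z.2.1) (z.1.2 - z.2.2))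
    (h (i - z.1.1) (j - z.1.2))

theorem convAssoc (π : ℤ → (B →ₗ[k] B)) (𝒟 : ℤ → Submodule k D)
    (hπ_idem : ∀ i j : ℤ, (π i).comp (π j) = if i = j then π i else 0)
    (hπ_fin : ∀ b : B, (Function.support fun i : ℤ => π i b).Finite)
    (hπ_sum : ∀ b : B, (∑ᶠ i : ℤ, π i b) = b)
    (hΔ_deg : ∀ (i i₁ i₂ : ℤ) (b : B), i₁ + i₂ ≠ i →
      TensorProduct.map (π i₁) (π i₂) (Coalgebra.comul (R := k) (π i b)) = 0)
    (h𝒟_mul : ∀ i j : ℤ, 𝒟 i * 𝒟 j ≤ 𝒟 (i + j))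
    (σ : ℤ) (hσ : σ = 1 ∨ σ = -1)
    {f g h : HomHat k B D}
    (hf : Compat k π 𝒟 f) (hcf : InCone k σ f)
    (hg : Compat k π 𝒟 g) (hcg : InCone k σ g)
    (hh : Compat k π 𝒟 h) (hch : InCone k σ h) :
    conv k π (conv k π f g) h = conv k π f (conv k π g h) := by
  have hfgC : Compat k π 𝒟 (conv k π f g) :=
    convCompat k π 𝒟 hπ_idem hπ_fin hπ_sum hΔ_deg h𝒟_mul σ hσ hf hcf hg hcg
  have hghC : Compat k π 𝒟 (conv k π g h) :=
    convCompat k π 𝒟 hπ_idem hπ_fin hπ_sum hΔ_deg h𝒟_mul σ hσ hg hcg hh hch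
  obtain ⟨Sf, hSf, hfS⟩ := hcf
  obtain ⟨Sg, hSg, hgS⟩ := hcg
  obtain ⟨Sh, hSh, hhS⟩ := hch
  funext i j
  -- zero-propagation for the triple terms
  have hLt0 : ∀ z : (ℤ × ℤ) × (ℤ × ℤ), LtD k f g h i j z ≠ 0 →
      z.2 ∈ ConeS σ Sf ∧ ((z.1.1 - z.2.1, z.1.2 - z.2.2) : ℤ × ℤ) ∈ ConeS σ Sg ∧
        ((i - z.1.1, j - z.1.2) : ℤ × ℤ) ∈ ConeS σ Sh := by
    intro z hz
    have h3 : h (i - z.1.1) (j - z.1.2) ≠ 0 := by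
      intro h0; apply hz; simp only [LtD]; rw [h0]
      exact convForm_zero_right k _
    have hct : cTerm k f g z.1.1 z.1.2 z.2 ≠ 0 := by
      intro h0; apply hz; simp only [LtD]; rw [h0]
      exact convForm_zero_left k _
    have h1 : f z.2.1 z.2.2 ≠ 0 := by
      intro h0; exact hct (cTerm_eq_zero_left k h0)
    have h2 : g (z.1.1 - z.2.1) (z.1.2 - z.2.2) ≠ 0 := by
      intro h0; exact hct (cTerm_eq_zero_right k h0)
    exact ⟨hfS z.2 h1, hgS _ h2, hhS _ h3⟩
  have hRt0 : ∀ z : (ℤ × ℤ) × (ℤ × ℤ), RtD k f g h i j z ≠ 0 →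
      z.1 ∈ ConeS σ Sf ∧ z.2 ∈ ConeS σ Sg ∧
        ((i - z.1.1 - z.2.1, j - z.1.2 - z.2.2) : ℤ × ℤ) ∈ ConeS σ Sh := by
    intro z hz
    have h1 : f z.1.1 z.1.2 ≠ 0 := by
      intro h0; apply hz; simp only [RtD]; rw [h0]
      exact convForm_zero_left k _
    have hct : cTerm k g h (i - z.1.1) (j - z.1.2) z.2 ≠ 0 := by
      intro h0; apply hz; simp only [RtD]; rw [h0]
      exact convForm_zero_right k _
    have h2 : g z.2.1 z.2.2 ≠ 0 := by
      intro h0; exact hct (cTerm_eq_zero_left k h0)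
    have h3 : h (i - z.1.1 - z.2.1) (j - z.1.2 - z.2.2) ≠ 0 := by
      intro h0; exact hct (cTerm_eq_zero_right k h0)
    exact ⟨hfS _ h1, hgS _ h2, hhS _ h3⟩
  -- the two sides as iterated finsums of triple terms
  have hL : conv k π (conv k π f g) h i j
      = ∑ᶠ p : ℤ × ℤ, ∑ᶠ q : ℤ × ℤ, LtD k f g h i j (p, q) := by
    rw [convEq k π hπ_fin hπ_sum hΔ_deg hfgC hh i j]
    refine finsum_congr fun p => ?_
    show (LinearMap.mul' k D).comp
        ((TensorProduct.map ((conv k π f g) p.1 p.2) (h (i - p.1) (j - p.2))).comp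
          ((TensorProduct.comm k B B).toLinearMap.comp (Coalgebra.comul (R := k))))
      = ∑ᶠ q : ℤ × ℤ, LtD k f g h i j (p, q)
    rw [convEq k π hπ_fin hπ_sum hΔ_deg hf hg p.1 p.2,
      push_left k (h (i - p.1) (j - p.2)) (cTermSuppFinite k σ hσ hSf hSg hfS hgS p.1 p.2)]
    rfl
  have hR : conv k π f (conv k π g h) i j
      = ∑ᶠ p : ℤ × ℤ, ∑ᶠ q : ℤ × ℤ, RtD k f g h i j (p, q) := by
    rw [convEq k π hπ_fin hπ_sum hΔ_deg hf hghC i j]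
    refine finsum_congr fun p => ?_
    show (LinearMap.mul' k D).comp
        ((TensorProduct.map (f p.1 p.2) ((conv k π g h) (i - p.1) (j - p.2))).comp
          ((TensorProduct.comm k B B).toLinearMap.comp (Coalgebra.comul (R := k))))
      = ∑ᶠ q : ℤ × ℤ, RtD k f g h i j (p, q)
    rw [convEq k π hπ_fin hπ_sum hΔ_deg hg hh (i - p.1) (j - p.2),
      push_right k (f p.1 p.2) (cTermSuppFinite k σ hσ hSg hSh hgS hhS (i - p.1) (j - p.2))]
    rfl
  rw [hL, hR]
  -- finiteness of the index sets
  have hW3 : ({z : (ℤ × ℤ) × (ℤ × ℤ) | z.2 ∈ ConeS σ Sf ∧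
      ((z.1.1 - z.2.1, z.1.2 - z.2.2) : ℤ × ℤ) ∈ ConeS σ Sg ∧
      ((i - z.1.1, j - z.1.2) : ℤ × ℤ) ∈ ConeS σ Sh}).Finite :=
    coneFin3 σ hσ Sf Sg Sh hSf hSg hSh (i, j)
  have hW3' : ({z : (ℤ × ℤ) × (ℤ × ℤ) | z.1 ∈ ConeS σ Sf ∧ z.2 ∈ ConeS σ Sg ∧
      ((i - z.1.1 - z.2.1, j - z.1.2 - z.2.2) : ℤ × ℤ) ∈ ConeS σ Sh}).Finite := by
    apply Set.Finite.subset (hW3.image (fun z => (z.2, (z.1.1 - z.2.1, z.1.2 - z.2.2))))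
    rintro ⟨u, v⟩ ⟨h1, h2, h3⟩
    refine ⟨((u.1 + v.1, u.2 + v.2), u), ⟨h1, ?_, ?_⟩, ?_⟩
    · simpa using h2
    · have he : ((i - (u.1 + v.1), j - (u.2 + v.2)) : ℤ × ℤ)
          = (i - u.1 - v.1, j - u.2 - v.2) := by
        apply Prod.ext <;> simp <;> ring
      simpa [he] using h3
    · apply Prod.ext
      · simp
      · apply Prod.ext <;> simp
  classical
  set P : Finset (ℤ × ℤ) := hW3.toFinset.image Prod.fst with hPdef
  set Q : Finset (ℤ × ℤ) := hW3.toFinset.image Prod.snd with hQdef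
  set P' : Finset (ℤ × ℤ) := hW3'.toFinset.image Prod.fst with hP'def
  set Q' : Finset (ℤ × ℤ) := hW3'.toFinset.image Prod.snd with hQ'def
  set e : (ℤ × ℤ) × (ℤ × ℤ) → (ℤ × ℤ) × (ℤ × ℤ) :=
    fun z => (z.2, (z.1.1 - z.2.1, z.1.2 - z.2.2)) with hedef
  set e' : (ℤ × ℤ) × (ℤ × ℤ) → (ℤ × ℤ) × (ℤ × ℤ) :=
    fun z => ((z.1.1 + z.2.1, z.1.2 + z.2.2), z.1) with he'def
  have hee' : ∀ z, e' (e z) = z := by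
    intro z
    simp only [hedef, he'def]
    apply Prod.ext
    · apply Prod.ext <;> simp <;> ring
    · simp
  have he'e : ∀ z, e (e' z) = z := by
    intro z
    simp only [hedef, he'def]
    apply Prod.ext
    · simp
    · apply Prod.ext <;> simp
  set E : Finset ((ℤ × ℤ) × (ℤ × ℤ)) := (P ×ˢ Q) ∪ (P' ×ˢ Q').image e' with hEdef
  set E' : Finset ((ℤ × ℤ) × (ℤ × ℤ)) := E.image e with hE'def
  -- membership helpers
  have hLtmem : ∀ z : (ℤ × ℤ) × (ℤ × ℤ), LtD k f g h i j z ≠ 0 → z ∈ P ×ˢ Q := by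
    intro z hz
    have hm := hLt0 z hz
    have hzW : z ∈ hW3.toFinset := hW3.mem_toFinset.2 hm
    exact Finset.mem_product.2
      ⟨Finset.mem_image.2 ⟨z, hzW, rfl⟩, Finset.mem_image.2 ⟨z, hzW, rfl⟩⟩
  have hRtmem : ∀ z : (ℤ × ℤ) × (ℤ × ℤ), RtD k f g h i j z ≠ 0 → z ∈ P' ×ˢ Q' := by
    intro z hz
    have hm := hRt0 z hz
    have hzW : z ∈ hW3'.toFinset := hW3'.mem_toFinset.2 hm
    exact Finset.mem_product.2
      ⟨Finset.mem_image.2 ⟨z, hzW, rfl⟩, Finset.mem_image.2 ⟨z, hzW, rfl⟩⟩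
  -- convert LHS to a single finset sum
  have hQsum : ∀ p : ℤ × ℤ, (∑ᶠ q : ℤ × ℤ, LtD k f g h i j (p, q))
      = ∑ q ∈ Q, LtD k f g h i j (p, q) := by
    intro p
    apply finsum_eq_finset_sum_of_support_subset
    intro q hq
    exact Finset.mem_coe.2 (Finset.mem_product.1 (hLtmem (p, q) hq)).2
  have hPsum : (Function.support fun p => ∑ q ∈ Q, LtD k f g h i j (p, q)) ⊆ ↑P := by
    intro p hp
    obtain ⟨q, _, hq2⟩ := Finset.exists_ne_zero_of_sum_ne_zero hp
    exact Finset.mem_coe.2 (Finset.mem_product.1 (hLtmem (p, q) hq2)).1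
  rw [finsum_congr hQsum, finsum_eq_finset_sum_of_support_subset _ hPsum,
    ← Finset.sum_product']
  -- convert RHS to a single finset sum
  have hQ'sum : ∀ p : ℤ × ℤ, (∑ᶠ q : ℤ × ℤ, RtD k f g h i j (p, q))
      = ∑ q ∈ Q', RtD k f g h i j (p, q) := by
    intro p
    apply finsum_eq_finset_sum_of_support_subset
    intro q hq
    exact Finset.mem_coe.2 (Finset.mem_product.1 (hRtmem (p, q) hq)).2
  have hP'sum : (Function.support fun p => ∑ q ∈ Q', RtD k f g h i j (p, q)) ⊆ ↑P' := by
    intro p hp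
    obtain ⟨q, _, hq2⟩ := Finset.exists_ne_zero_of_sum_ne_zero hp
    exact Finset.mem_coe.2 (Finset.mem_product.1 (hRtmem (p, q) hq2)).1
  rw [finsum_congr hQ'sum, finsum_eq_finset_sum_of_support_subset _ hP'sum,
    ← Finset.sum_product']
  -- enlarge both sums to E resp. E'
  have hsubL : P ×ˢ Q ⊆ E := Finset.subset_union_left
  have hsubR : P' ×ˢ Q' ⊆ E' := by
    intro z hz
    have h1 : e' z ∈ E := Finset.mem_union_right _ (Finset.mem_image_of_mem e' hz)
    have h2 : e (e' z) ∈ E' := Finset.mem_image_of_mem e h1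
    rwa [he'e z] at h2
  rw [Finset.sum_subset hsubL (by
    intro z _ hz
    by_contra h0
    exact hz (by simpa using hLtmem (z.1, z.2) (by simpa using h0)))]
  rw [Finset.sum_subset hsubR (by
    intro z _ hz
    by_contra h0
    exact hz (by simpa using hRtmem (z.1, z.2) (by simpa using h0)))]
  -- reindex via the bijection e
  refine Finset.sum_nbij' e e' ?_ ?_ ?_ ?_ ?_
  · intro z hz; exact Finset.mem_image_of_mem e hz
  · intro z hz
    obtain ⟨w, hw, rfl⟩ := Finset.mem_image.1 hz
    rwa [hee' w]
  · intro z _; exact hee' z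
  · intro z _; exact he'e z
  · intro z _
    have := key_exchange k f g h i j (z.1, z.2)
    simpa [hedef] using this

end AuxLemmas


/-- let `B` be a ℤ-graded bialgebra (grading realized by the
projections `π i`, with graded comultiplication and counit) and `D` a
ℤ-graded algebra (grading `𝒟`), and consider the component space
`Hom(B, D̂) = ∏ Hom(B_i, D_j)` with the convolution
`(f₁ * f₂)(b) = f₁(b⁽²⁾) f₂(b⁽¹⁾)`.  Then `Hom₊(B, D̂)` and `Hom₋(B, D̂)`
(the maps with support in `S + ℕ(1,1)`, resp. `S + ℕ(−1,−1)`, `S` finite) are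
each associative algebras under convolution, with unit `1_* : b ↦ ε(b)·1_D`. -/
theorem stmt12 {B D : Type*} [Ring B] [Bialgebra k B] [Ring D] [Algebra k D]
    (π : ℤ → (B →ₗ[k] B)) (𝒟 : ℤ → Submodule k D)
    -- π is a grading of B:
    (hπ_idem : ∀ i j : ℤ, (π i).comp (π j) = if i = j then π i else 0)
    (hπ_fin : ∀ b : B, (Function.support fun i : ℤ => π i b).Finite)
    (hπ_sum : ∀ b : B, (∑ᶠ i : ℤ, π i b) = b)
    -- the comultiplication of B is graded:
    (hΔ_deg : ∀ (i i₁ i₂ : ℤ) (b : B), i₁ + i₂ ≠ i →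
      TensorProduct.map (π i₁) (π i₂) (Coalgebra.comul (R := k) (π i b)) = 0)
    (hΔ_fin : ∀ b : B, (Function.support fun p : ℤ × ℤ =>
      TensorProduct.map (π p.1) (π p.2) (Coalgebra.comul (R := k) b)).Finite)
    (hΔ_sum : ∀ b : B, (∑ᶠ p : ℤ × ℤ,
      TensorProduct.map (π p.1) (π p.2) (Coalgebra.comul (R := k) b))
        = Coalgebra.comul (R := k) b)
    -- the counit of B is graded:
    (hε_deg : ∀ i : ℤ, i ≠ 0 → ∀ b : B, Coalgebra.counit (R := k) (π i b) = 0)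
    -- 𝒟 is a grading of the algebra D (only the multiplicativity is needed):
    (h𝒟_mul : ∀ i j : ℤ, 𝒟 i * 𝒟 j ≤ 𝒟 (i + j))
    (h𝒟_one : (1 : D) ∈ 𝒟 0)
    -- σ = 1 gives Hom₊, σ = −1 gives Hom₋:
    (σ : ℤ) (hσ : σ = 1 ∨ σ = -1) :
    -- the convolution of two elements of Hom_σ lies in Hom_σ:
    (∀ f g : HomHat k B D,
      Compat k π 𝒟 f → InCone k σ f → Compat k π 𝒟 g → InCone k σ g →
        Compat k π 𝒟 (conv k π f g) ∧ InCone k σ (conv k π f g)) ∧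
    -- associativity:
    (∀ f g h : HomHat k B D,
      Compat k π 𝒟 f → InCone k σ f → Compat k π 𝒟 g → InCone k σ g →
      Compat k π 𝒟 h → InCone k σ h →
        conv k π (conv k π f g) h = conv k π f (conv k π g h)) ∧
    -- 1_* is a two-sided unit:
    (∀ f : HomHat k B D, Compat k π 𝒟 f → InCone k σ f →
      conv k π f (unitF k) = f ∧ conv k π (unitF k) f = f) := by
  refine ⟨?_, ?_, ?_⟩
  · intro f g hf hcf hg hcg
    exact ⟨convCompat k π 𝒟 hπ_idem hπ_fin hπ_sum hΔ_deg h𝒟_mul σ hσ hf hcf hg hcg,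
      convInCone k π 𝒟 hπ_fin hπ_sum hΔ_deg σ hf hcf hg hcg⟩
  · intro f g h hf hcf hg hcg hh hch
    exact convAssoc k π 𝒟 hπ_idem hπ_fin hπ_sum hΔ_deg h𝒟_mul σ hσ hf hcf hg hcg hh hch
  · intro f hf hcf
    exact ⟨convUnitRight k π 𝒟 hf, convUnitLeft k π 𝒟 hf⟩
end
end

section
/- Under hypotheses (H1)–(H6) of the topological setting (D a ℤ-graded topological bialgebra containing graded bialgebras A, B with a nondegenerate graded bialgebra pairing, coideal subalgebras A₁, A₂ ⊆ A and B₁, B₂ ⊆ B with triangular decompositions), let f ∈ Hom₋(B, D̂) be the image of R₁^{-1} and P₂, P₁ the projections with P₂(b₂b₁) = b₂ε(b₁), P₁(b₂b₁) = ε(b₂)b₁. Then f satisfies: f(b₂b₁) = f(b₂)ε(b₁) for b₁ ∈ B₁, b₂ ∈ B₂, and f(b^{(2)}) b^{(1)} = P₁(b) for all b ∈ B. -/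
open TensorProduct

noncomputable section

/-!
Write `u ⋆ v` for the twisted convolution `b ↦ u(b⁽²⁾) v(b⁽¹⁾)` on `Hom(B, D)`; composing with
`op : D → Dᵐᵒᵖ` turns `u ⋆ v` into the ordinary convolution `op v * op u` on `Hom(B, Dᵐᵒᵖ)`, so the
hypotheses say that `op f` is a two-sided convolution inverse of `Q = op (ι ∘ P₂)`.

Since `B₁` is a left coideal, the identity `Q(y c) = ε(c) Q(y)` (`c ∈ B₁`) lets right multiplication
by `c` commute with convolving against `Q`; applied to `op f * Q = 1` it gives
`(f(· c)) ⋆ P₂ = ε(c)`, and multiplying by the inverse yields `f(y c) = ε(c) f(y)`, which is (i).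
For (ii), the same identity together with `B₂` being a right coideal gives `P₂ ⋆ P₁ = id` on
`B = B₂B₁`, hence `f ⋆ id = (f ⋆ P₂) ⋆ P₁ = P₁`.
-/

open Coalgebra LinearMap WithConv MulOpposite

theorem LinearMap.eq_of_mem_sTen {R A B M : Type*} [CommSemiring R] [AddCommMonoid A]
    [AddCommMonoid B] [AddCommMonoid M] [Module R A] [Module R B] [Module R M]
    {p : Submodule R A} {q : Submodule R B} {L L' : A ⊗[R] B →ₗ[R] M}
    (h : ∀ a ∈ p, ∀ b ∈ q, L (a ⊗ₜ b) = L' (a ⊗ₜ b)) {t : A ⊗[R] B} (ht : t ∈ sTen R p q) :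
    L t = L' t := by
  obtain ⟨t, rfl⟩ := ht
  exact LinearMap.congr_fun (TensorProduct.ext' fun a b => h a a.2 b b.2 :
    L ∘ₗ map p.subtype q.subtype = L' ∘ₗ map p.subtype q.subtype) t

theorem mul'_map_mul_tmul {R C A : Type*} [CommSemiring R] [Semiring C] [Algebra R C]
    [Semiring A] [Algebra R A] (u v : C →ₗ[R] A) (t : C ⊗[R] C) (a b : C) :
    mul' R A (map u v (t * (a ⊗ₜ b))) =
      mul' R A (map (u ∘ₗ mulRight R a) (v ∘ₗ mulRight R b) t) := by
  induction t with
  | zero => simp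
  | tmul x y => simp
  | add s t hs ht => simp_all [add_mul]

section Convolution

variable {R C A : Type*} [CommSemiring R] [Semiring A] [Algebra R A]

section Coalgebra

variable [AddCommMonoid C] [Module R C] [Coalgebra R C]

theorem convMul_apply_eq_of_eqOn {p : Submodule R C} {x : C} (hx : comul x ∈ sTen R p ⊤)
    {u u' : WithConv (C →ₗ[R] A)} (h : ∀ y ∈ p, u y = u' y) (v : WithConv (C →ₗ[R] A)) :
    (u * v) x = (u' * v) x := by
  simp only [convMul_apply]
  exact eq_of_mem_sTen (L := mul' R A ∘ₗ map u.ofConv v.ofConv)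
    (L' := mul' R A ∘ₗ map u'.ofConv v.ofConv) (fun y hy z _ => by simp [h y hy]) hx

theorem toConv_toSpanSingleton_comp_counit_mul_apply (a : A) (v : WithConv (C →ₗ[R] A))
    (x : C) :
    (toConv (toSpanSingleton R A a ∘ₗ counit) * v : WithConv (C →ₗ[R] A)) x = a * v x := by
  have h : mul' R A ∘ₗ map (toSpanSingleton R A a ∘ₗ counit) v.ofConv =
      mulLeft R a ∘ₗ v.ofConv ∘ₗ (TensorProduct.lid R C).toLinearMap ∘ₗ
        rTensor C (counit (R := R)) :=
    TensorProduct.ext' fun (y z : C) => by simp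
  rw [convMul_apply, ← LinearMap.comp_apply, h]
  simp

end Coalgebra

variable [Semiring C] [Bialgebra R C]

theorem toConv_convMul_comp_mulRight {q : Submodule R C} {w : C}
    (hw : comul w ∈ sTen R ⊤ q) (u : WithConv (C →ₗ[R] A)) {v : WithConv (C →ₗ[R] A)}
    (hv : ∀ y, ∀ z ∈ q, v (y * z) = counit (R := R) z • v y) :
    toConv ((u * v).ofConv ∘ₗ mulRight R w) = toConv (u.ofConv ∘ₗ mulRight R w) * v := by
  ext x
  set Φ := mul' R A ∘ₗ map u.ofConv v.ofConv ∘ₗ mulLeft R (comul x)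
  have hΦ : Φ (comul w) = Φ (w ⊗ₜ 1) := by
    simpa using eq_of_mem_sTen (L := Φ) (L' := Φ ∘ₗ (mk R C C).flip 1 ∘ₗ
      (TensorProduct.rid R C).toLinearMap ∘ₗ lTensor C (counit (R := R)))
      (fun a _ c hc => by
        have hvc : v.ofConv ∘ₗ mulRight R c = counit (R := R) c • v.ofConv :=
          LinearMap.ext fun y => hv y c hc
        simp [Φ, mul'_map_mul_tmul, hvc, TensorProduct.map_smul_right]) hw
  simpa [Φ, Bialgebra.comul_mul, mul'_map_mul_tmul] using hΦ

theorem apply_mul_eq_counit_smul_of_convMul_eq_one {q : Submodule R C} {w : C}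
    (hw : comul w ∈ sTen R ⊤ q) {F Q : WithConv (C →ₗ[R] A)}
    (hQ : ∀ y, ∀ z ∈ q, Q (y * z) = counit (R := R) z • Q y) (hFQ : F * Q = 1) (hQF : Q * F = 1)
    (x : C) : F (x * w) = counit (R := R) w • F x := by
  have hFwQ : toConv (F.ofConv ∘ₗ mulRight R w) * Q = counit (R := R) w • 1 := by
    rw [← toConv_convMul_comp_mulRight hw F hQ, hFQ]
    ext c
    simp [Bialgebra.counit_mul, Algebra.smul_def, mul_comm]
  have hFw : toConv (F.ofConv ∘ₗ mulRight R w) = counit (R := R) w • F := by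
    rw [← mul_one (toConv _), ← hQF, ← mul_assoc, hFwQ, smul_mul_assoc, one_mul]
  simpa using congr($hFw x)

end Convolution

section Opposite

variable {R B D : Type*} [CommSemiring R] [Semiring B] [Bialgebra R B] [Semiring D] [Algebra R D]

def opConv (u : B →ₗ[R] D) : WithConv (B →ₗ[R] Dᵐᵒᵖ) :=
  toConv ((opLinearEquiv R).toLinearMap ∘ₗ u)

@[simp] theorem opConv_apply (u : B →ₗ[R] D) (b : B) : opConv u b = op (u b) := rfl

theorem opConv_mul_opConv_apply (u v : B →ₗ[R] D) (b : B) :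
    (opConv v * opConv u) b = op (mul' R D (map u v (TensorProduct.comm R B B (comul b)))) := by
  rw [convMul_apply]
  induction comul (R := R) b with
  | zero => simp
  | tmul x y => simp [opConv]
  | add s t hs ht => simp_all

theorem opConv_mul_opConv_eq_one {u v : B →ₗ[R] D}
    (h : ∀ b, mul' R D (map u v (TensorProduct.comm R B B (comul b))) = counit (R := R) b • 1) :
    opConv v * opConv u = 1 := by
  ext b
  rw [opConv_mul_opConv_apply, h, convOne_apply, Algebra.algebraMap_eq_smul_one]
  rfl

end Opposite

section Triangular

variable {R B : Type*} [CommSemiring R] [Semiring B] [Bialgebra R B] {B₁ B₂ : Subalgebra R B}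

theorem LinearMap.ext_of_surjective_mul {M : Type*} [AddCommMonoid M] [Module R M]
    (hsurj : Function.Surjective
      (Submodule.mulMap (Subalgebra.toSubmodule B₂) (Subalgebra.toSubmodule B₁)))
    {L L' : B →ₗ[R] M} (h : ∀ b₂ ∈ B₂, ∀ b₁ ∈ B₁, L (b₂ * b₁) = L' (b₂ * b₁)) : L = L' :=
  (cancel_right hsurj).mp <| TensorProduct.ext' fun x y => h x x.2 y y.2

theorem map_mul_eq_counit_smul_of_mem_right
    (hsurj : Function.Surjective
      (Submodule.mulMap (Subalgebra.toSubmodule B₂) (Subalgebra.toSubmodule B₁)))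
    {P₂ : B →ₗ[R] B}
    (hP₂ : ∀ b₂ ∈ B₂, ∀ b₁ ∈ B₁, P₂ (b₂ * b₁) = counit (R := R) b₁ • b₂)
    {c : B} (hc : c ∈ B₁) (x : B) : P₂ (x * c) = counit (R := R) c • P₂ x := by
  refine LinearMap.congr_fun (ext_of_surjective_mul hsurj fun b₂ hb₂ b₁ hb₁ => ?_ :
    P₂ ∘ₗ mulRight R c = counit (R := R) c • P₂) x
  simp [mul_assoc, hP₂ b₂ hb₂ _ (mul_mem hb₁ hc), hP₂ b₂ hb₂ b₁ hb₁, smul_smul, mul_comm]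

theorem map_mul_eq_counit_smul_of_mem_left
    (hsurj : Function.Surjective
      (Submodule.mulMap (Subalgebra.toSubmodule B₂) (Subalgebra.toSubmodule B₁)))
    {P₁ : B →ₗ[R] B}
    (hP₁ : ∀ b₂ ∈ B₂, ∀ b₁ ∈ B₁, P₁ (b₂ * b₁) = counit (R := R) b₂ • b₁)
    {c : B} (hc : c ∈ B₂) (x : B) : P₁ (c * x) = counit (R := R) c • P₁ x := by
  refine LinearMap.congr_fun (ext_of_surjective_mul hsurj fun b₂ hb₂ b₁ hb₁ => ?_ :
    P₁ ∘ₗ mulLeft R c = counit (R := R) c • P₁) x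
  simp [← mul_assoc, hP₁ _ (mul_mem hc hb₂) b₁ hb₁, hP₁ b₂ hb₂ b₁ hb₁, smul_smul]

theorem opConv_comp_apply_mul_of_mem_right {D : Type*} [Semiring D] [Algebra R D]
    (hsurj : Function.Surjective
      (Submodule.mulMap (Subalgebra.toSubmodule B₂) (Subalgebra.toSubmodule B₁)))
    {P₂ : B →ₗ[R] B}
    (hP₂ : ∀ b₂ ∈ B₂, ∀ b₁ ∈ B₁, P₂ (b₂ * b₁) = counit (R := R) b₁ • b₂) (φ : B →ₗ[R] D)
    (y : B) {z : B} (hz : z ∈ B₁) :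
    opConv (φ ∘ₗ P₂) (y * z) = counit (R := R) z • opConv (φ ∘ₗ P₂) y := by
  simp [map_mul_eq_counit_smul_of_mem_right hsurj hP₂ hz]

theorem opConv_comp_mul_opConv_comp_eq_opConv {D : Type*} [Semiring D] [Algebra R D]
    (hsurj : Function.Surjective
      (Submodule.mulMap (Subalgebra.toSubmodule B₂) (Subalgebra.toSubmodule B₁)))
    (hB₁ : ∀ x ∈ B₁, comul (R := R) x ∈ sTen R ⊤ (Subalgebra.toSubmodule B₁))
    (hB₂ : ∀ x ∈ B₂, comul (R := R) x ∈ sTen R (Subalgebra.toSubmodule B₂) ⊤)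
    {P₁ P₂ : B →ₗ[R] B}
    (hP₁ : ∀ b₂ ∈ B₂, ∀ b₁ ∈ B₁, P₁ (b₂ * b₁) = counit (R := R) b₂ • b₁)
    (hP₂ : ∀ b₂ ∈ B₂, ∀ b₁ ∈ B₁, P₂ (b₂ * b₁) = counit (R := R) b₁ • b₂) (φ : B →ₐ[R] D) :
    opConv (φ.toLinearMap ∘ₗ P₁) * opConv (φ.toLinearMap ∘ₗ P₂) = opConv φ.toLinearMap := by
  ext : 1
  refine ext_of_surjective_mul hsurj fun b₂ hb₂ b₁ hb₁ => ?_
  have hP₂b₂ : P₂ b₂ = b₂ := by simpa using hP₂ b₂ hb₂ 1 B₁.one_mem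
  have hP₁b₁ : P₁ b₁ = b₁ := by simpa using hP₁ 1 B₂.one_mem b₁ hb₁
  have hP₁' : ∀ y ∈ B₂, (opConv (φ.toLinearMap ∘ₗ P₁)) (y * b₁) =
      toSpanSingleton R Dᵐᵒᵖ (op (φ b₁)) (counit (R := R) y) := fun y hy => by
    simp [map_mul_eq_counit_smul_of_mem_left hsurj hP₁ hy, hP₁b₁]
  calc (opConv (φ.toLinearMap ∘ₗ P₁) * opConv (φ.toLinearMap ∘ₗ P₂)) (b₂ * b₁)
      = (toConv ((opConv (φ.toLinearMap ∘ₗ P₁)).ofConv ∘ₗ mulRight R b₁) *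
          opConv (φ.toLinearMap ∘ₗ P₂)) b₂ :=
        congr($(toConv_convMul_comp_mulRight (hB₁ b₁ hb₁) _
          (fun y _ => opConv_comp_apply_mul_of_mem_right hsurj hP₂ _ y)) b₂)
    _ = (toConv (toSpanSingleton R Dᵐᵒᵖ (op (φ b₁)) ∘ₗ counit) *
          opConv (φ.toLinearMap ∘ₗ P₂) : WithConv (B →ₗ[R] Dᵐᵒᵖ)) b₂ :=
        convMul_apply_eq_of_eqOn (hB₂ b₂ hb₂) hP₁' _
    _ = opConv φ.toLinearMap (b₂ * b₁) := by
        rw [toConv_toSpanSingleton_comp_counit_mul_apply]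
        simp [hP₂b₂]

end Triangular

theorem stmt13_general (k : Type*) [Field k] {B D : Type*} [Ring B] [Bialgebra k B]
    [Ring D] [Algebra k D]
    (ι : B →ₐ[k] D)
    (B₁ B₂ : Subalgebra k B)
    -- B₁ is a left coideal, B₂ a right coideal of B
    (hB₁ : ∀ x ∈ B₁, Coalgebra.comul (R := k) x ∈ sTen k ⊤ (Subalgebra.toSubmodule B₁))
    (hB₂ : ∀ x ∈ B₂, Coalgebra.comul (R := k) x ∈ sTen k (Subalgebra.toSubmodule B₂) ⊤)
    -- the product map B₂ ⊗ B₁ → B is a linear isomorphism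
    (hiso : Function.Bijective
      ((LinearMap.mul' k B).comp
        (TensorProduct.map (Subalgebra.toSubmodule B₂).subtype
          (Subalgebra.toSubmodule B₁).subtype)))
    -- the projections P₂, P₁ on the two factors
    (P₁ P₂ : B →ₗ[k] B)
    (hP₁ : ∀ b₂ ∈ B₂, ∀ b₁ ∈ B₁, P₁ (b₂ * b₁) = Coalgebra.counit (R := k) b₂ • b₁)
    (hP₂ : ∀ b₂ ∈ B₂, ∀ b₁ ∈ B₁, P₂ (b₂ * b₁) = Coalgebra.counit (R := k) b₁ • b₂)
    -- f = [R₁⁻¹], with values in (the completion of) D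
    (f : B →ₗ[k] D)
    -- f * P₂ = 1_* :  f(b⁽²⁾) P₂(b⁽¹⁾) = ε(b) 1
    (hconv₁ : ∀ b : B,
      LinearMap.mul' k D
        ((TensorProduct.map f (ι.toLinearMap.comp P₂))
          ((TensorProduct.comm k B B) (Coalgebra.comul (R := k) b)))
        = Coalgebra.counit (R := k) b • (1 : D))
    -- P₂ * f = 1_* :  P₂(b⁽²⁾) f(b⁽¹⁾) = ε(b) 1
    (hconv₂ : ∀ b : B,
      LinearMap.mul' k D
        ((TensorProduct.map (ι.toLinearMap.comp P₂) f)
          ((TensorProduct.comm k B B) (Coalgebra.comul (R := k) b)))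
        = Coalgebra.counit (R := k) b • (1 : D)) :
    -- conclusion (i): f(b₂b₁) = f(b₂) ε(b₁)
    (∀ b₂ ∈ B₂, ∀ b₁ ∈ B₁, f (b₂ * b₁) = Coalgebra.counit (R := k) b₁ • f b₂) ∧
    -- conclusion (ii): f(b⁽²⁾) b⁽¹⁾ = P₁(b)
    (∀ b : B,
      LinearMap.mul' k D
        ((TensorProduct.map f ι.toLinearMap)
          ((TensorProduct.comm k B B) (Coalgebra.comul (R := k) b)))
        = ι (P₁ b)) := by
  have hsurj : Function.Surjective
      (Submodule.mulMap (Subalgebra.toSubmodule B₂) (Subalgebra.toSubmodule B₁)) := by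
    rw [Submodule.mulMap_eq_mul'_comp_mapIncl]
    exact hiso.2
  have hQF := opConv_mul_opConv_eq_one hconv₁
  have hFQ := opConv_mul_opConv_eq_one hconv₂
  refine ⟨fun b₂ _ b₁ hb₁ => ?_, fun b => ?_⟩
  · exact op_injective <| apply_mul_eq_counit_smul_of_convMul_eq_one (hB₁ b₁ hb₁)
      (fun y _ => opConv_comp_apply_mul_of_mem_right hsurj hP₂ _ y) hFQ hQF b₂
  · have h : opConv ι.toLinearMap * opConv f = opConv (ι.toLinearMap ∘ₗ P₁) := by
      rw [← opConv_comp_mul_opConv_comp_eq_opConv hsurj hB₁ hB₂ hP₁ hP₂, mul_assoc, hQF,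
        mul_one]
    exact op_injective ((opConv_mul_opConv_apply f ι.toLinearMap b).symm.trans congr($h b))

/-- in the topological setting (H1)–(H6), let `B = B₂B₁` be the
triangular decomposition of `B` (realized inside the big algebra `D` via `ι`),
with projections `P₂(b₂b₁) = b₂ ε(b₁)`, `P₁(b₂b₁) = ε(b₂) b₁`, and let
`f = [R₁^{-1}]` be the image of `R₁⁻¹` in the convolution algebra
`Hom₋(B, D̂)`, so that `f * P₂ = P₂ * f = 1_*` (the convolution being
`(f₁ * f₂)(b) = f₁(b⁽²⁾)f₂(b⁽¹⁾)`).  Then `f(b₂b₁) = f(b₂)ε(b₁)` for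
`b₂ ∈ B₂`, `b₁ ∈ B₁`, and `f(b⁽²⁾)·b⁽¹⁾ = P₁(b)` for all `b ∈ B`. -/
theorem stmt13 (k : Type*) [Field k] {B D : Type*} [Ring B] [Bialgebra k B]
    [Ring D] [Algebra k D]
    (ι : B →ₐ[k] D) (hι : Function.Injective ι)
    (B₁ B₂ : Subalgebra k B)
    -- B₁ is a left coideal, B₂ a right coideal of B
    (hB₁ : ∀ x ∈ B₁, Coalgebra.comul (R := k) x ∈ sTen k ⊤ (Subalgebra.toSubmodule B₁))
    (hB₂ : ∀ x ∈ B₂, Coalgebra.comul (R := k) x ∈ sTen k (Subalgebra.toSubmodule B₂) ⊤)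
    -- the product map B₂ ⊗ B₁ → B is a linear isomorphism
    (hiso : Function.Bijective
      ((LinearMap.mul' k B).comp
        (TensorProduct.map (Subalgebra.toSubmodule B₂).subtype
          (Subalgebra.toSubmodule B₁).subtype)))
    -- the projections P₂, P₁ on the two factors
    (P₁ P₂ : B →ₗ[k] B)
    (hP₁ : ∀ b₂ ∈ B₂, ∀ b₁ ∈ B₁, P₁ (b₂ * b₁) = Coalgebra.counit (R := k) b₂ • b₁)
    (hP₂ : ∀ b₂ ∈ B₂, ∀ b₁ ∈ B₁, P₂ (b₂ * b₁) = Coalgebra.counit (R := k) b₁ • b₂)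
    -- f = [R₁⁻¹], with values in (the completion of) D
    (f : B →ₗ[k] D)
    -- f * P₂ = 1_* :  f(b⁽²⁾) P₂(b⁽¹⁾) = ε(b) 1
    (hconv₁ : ∀ b : B,
      LinearMap.mul' k D
        ((TensorProduct.map f (ι.toLinearMap.comp P₂))
          ((TensorProduct.comm k B B) (Coalgebra.comul (R := k) b)))
        = Coalgebra.counit (R := k) b • (1 : D))
    -- P₂ * f = 1_* :  P₂(b⁽²⁾) f(b⁽¹⁾) = ε(b) 1
    (hconv₂ : ∀ b : B,
      LinearMap.mul' k D
        ((TensorProduct.map (ι.toLinearMap.comp P₂) f)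
          ((TensorProduct.comm k B B) (Coalgebra.comul (R := k) b)))
        = Coalgebra.counit (R := k) b • (1 : D)) :
    -- conclusion (i): f(b₂b₁) = f(b₂) ε(b₁)
    (∀ b₂ ∈ B₂, ∀ b₁ ∈ B₁, f (b₂ * b₁) = Coalgebra.counit (R := k) b₁ • f b₂) ∧
    -- conclusion (ii): f(b⁽²⁾) b⁽¹⁾ = P₁(b)
    (∀ b : B,
      LinearMap.mul' k D
        ((TensorProduct.map f ι.toLinearMap)
          ((TensorProduct.comm k B B) (Coalgebra.comul (R := k) b)))
        = ι (P₁ b)) :=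
  stmt13_general k ι B₁ B₂ hB₁ hB₂ hiso P₁ P₂ hP₁ hP₂ f hconv₁ hconv₂
end
end
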